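/- Define the modulation encoder E : {1,2,3,4} → ℂ by E(1) = 1, E(2) = −1, E(3) = i, E(4) = −i, and the channel code c : {1,2,3,4} → {0,1}² by c(x) = (1,0) if x ∈ {1,3} and c(x) = (0,1) if x ∈ {2,4}. For a tuple (x₁,x₂,x₃,x₄) ∈ {1,2,3,4}⁴ let y(x) = (∑_{k=1}^4 E(x_k) c(x_k)₁, ∑_{k=1}^4 E(x_k) c(x_k)₂) ∈ ℂ². Then for all tuples x, x' ∈ {1,2,3,4}⁴, if x₁x₂x₃x₄ ≠ x₁'x₂'x₃'x₄' then y(x) ≠ y(x'); that is, the noiseless two-slot received pair uniquely determines the product x₁x₂x₃x₄. -/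

import Mathlib

/-- The QPSK-type modulation encoder `E(1)=1, E(2)=−1, E(3)=i, E(4)=−i`. -/
noncomputable def modEnc14 : ℕ → ℂ := fun x =>
  if x = 1 then 1 else if x = 2 then -1 else if x = 3 then Complex.I else
    if x = 4 then -Complex.I else 0

/-- The channel code over `L = 2` time slots: `c(x) = (1,0)` if `x ∈ {1,3}` and
`c(x) = (0,1)` if `x ∈ {2,4}` (components given as complex indicators). -/
noncomputable def chanCode : ℕ → ℂ × ℂ := fun x =>
  if x = 1 ∨ x = 3 then (1, 0) else (0, 1)

/-- The noiseless two-slot received pair. -/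
noncomputable def rxPair (x : Fin 4 → ℕ) : ℂ × ℂ :=
  (∑ k, modEnc14 (x k) * (chanCode (x k)).1, ∑ k, modEnc14 (x k) * (chanCode (x k)).2)

/-!
Each symbol lights up exactly one (slot, real/imaginary) coordinate, so the first slot receives
`#{k | x k = 1} + i·#{k | x k = 3}` and the second `-(#{k | x k = 2} + i·#{k | x k = 4})`.
The received pair therefore determines how often each input occurs, and with it the product.
-/

open Finset

theorem Finset.prod_eq_prod_pow_card_filter {ι M : Type*} [Fintype ι] [CommMonoid M]
    [DecidableEq M] {s : Finset M} {x : ι → M} (hx : ∀ k, x k ∈ s) :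
    ∏ k, x k = ∏ v ∈ s, v ^ #{k | x k = v} := by
  rw [← prod_fiberwise_of_maps_to (fun k _ => hx k) x]
  refine prod_congr rfl fun v _ => ?_
  rw [prod_congr rfl fun k hk => (mem_filter.1 hk).2, prod_const]

theorem Finset.prod_eq_prod_of_card_filter_eq {ι M : Type*} [Fintype ι] [CommMonoid M]
    [DecidableEq M] {s : Finset M} {x x' : ι → M} (hx : ∀ k, x k ∈ s) (hx' : ∀ k, x' k ∈ s)
    (h : ∀ v ∈ s, #{k | x k = v} = #{k | x' k = v}) :
    ∏ k, x k = ∏ k, x' k := by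
  rw [prod_eq_prod_pow_card_filter hx, prod_eq_prod_pow_card_filter hx']
  exact prod_congr rfl fun v hv => by rw [h v hv]

theorem natCast_add_natCast_mul_I_inj {a b a' b' : ℕ}
    (h : (a : ℂ) + b * Complex.I = a' + b' * Complex.I) : a = a' ∧ b = b' := by
  simpa [Complex.ext_iff] using h

theorem modEnc14_mul_chanCode {n : ℕ} (hn : n ∈ ({1, 2, 3, 4} : Finset ℕ)) :
    (modEnc14 n * (chanCode n).1, modEnc14 n * (chanCode n).2) =
      ((if n = 1 then 1 else 0) + (if n = 3 then 1 else 0) * Complex.I,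
        -((if n = 2 then 1 else 0) + (if n = 4 then 1 else 0) * Complex.I)) := by
  simp only [mem_insert, mem_singleton] at hn
  rcases hn with rfl | rfl | rfl | rfl <;> simp [modEnc14, chanCode]

theorem rxPair_eq {x : Fin 4 → ℕ} (hx : ∀ k, x k ∈ ({1, 2, 3, 4} : Finset ℕ)) :
    rxPair x =
      ((#{k | x k = 1} : ℂ) + #{k | x k = 3} * Complex.I,
        -((#{k | x k = 2} : ℂ) + #{k | x k = 4} * Complex.I)) := by
  have h1 k := congrArg Prod.fst (modEnc14_mul_chanCode (hx k))
  have h2 k := congrArg Prod.snd (modEnc14_mul_chanCode (hx k))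
  simp only at h1 h2
  simp only [rxPair, h1, h2, card_filter, sum_add_distrib, sum_neg_distrib, ← sum_mul]
  push_cast
  rfl

theorem card_filter_eq_of_rxPair_eq {x x' : Fin 4 → ℕ}
    (hx : ∀ k, x k ∈ ({1, 2, 3, 4} : Finset ℕ)) (hx' : ∀ k, x' k ∈ ({1, 2, 3, 4} : Finset ℕ))
    (h : rxPair x = rxPair x') :
    ∀ v ∈ ({1, 2, 3, 4} : Finset ℕ), #{k | x k = v} = #{k | x' k = v} := by
  rw [rxPair_eq hx, rxPair_eq hx', Prod.mk.injEq, neg_inj] at h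
  obtain ⟨h13, h24⟩ := h
  obtain ⟨h1, h3⟩ := natCast_add_natCast_mul_I_inj h13
  obtain ⟨h2, h4⟩ := natCast_add_natCast_mul_I_inj h24
  intro v hv
  simp only [mem_insert, mem_singleton] at hv
  rcases hv with rfl | rfl | rfl | rfl <;> assumption

/-- Correctness of the illustrative two-slot scheme (Table I): for all tuples
`x, x' ∈ {1,2,3,4}⁴`, if the products differ then the noiseless two-slot
received pairs differ; i.e., the received pair uniquely determines the product. -/
theorem stmt_14 :
    ∀ x x' : Fin 4 → ℕ,
      (∀ k, x k ∈ ({1, 2, 3, 4} : Set ℕ)) → (∀ k, x' k ∈ ({1, 2, 3, 4} : Set ℕ)) →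
      (∏ k, x k) ≠ (∏ k, x' k) → rxPair x ≠ rxPair x' := by
  intro x x' hx hx' hprod hrx
  replace hx k : x k ∈ ({1, 2, 3, 4} : Finset ℕ) := by simpa using hx k
  replace hx' k : x' k ∈ ({1, 2, 3, 4} : Finset ℕ) := by simpa using hx' k
  exact hprod <| prod_eq_prod_of_card_filter_eq hx hx' <|
    card_filter_eq_of_rxPair_eq hx hx' hrx
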